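/- arXiv:1904.05952 — 3 statements merged into one kernel-verified Lean document; each statement's English description precedes it below -/
import Mathlib

section
/- For the check function ρ_τ(u) := u(τ − 1{u<0}) with τ ∈ (0,1), and any real numbers v₁, v₂, one has ρ_τ(v₁ − v₂) − ρ_τ(v₁) = −v₂·ξ_τ(v₁) + ∫₀^{v₂} (1{v₁ ≤ s} − 1{v₁ < 0}) ds, where ξ_τ(v) := τ − 1{v<0}. -/
/-- The check function of quantile regression: ρ_τ(u) = u(τ − 1{u<0}). -/
noncomputable def check (τ u : ℝ) : ℝ := u * (τ - if u < 0 then 1 else 0)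

/-- ξ_τ(v) = τ − 1{v<0}. -/
noncomputable def xi (τ v : ℝ) : ℝ := τ - if v < 0 then 1 else 0

lemma step_monotone (c : ℝ) : Monotone (fun s : ℝ => if c ≤ s then (1:ℝ) else 0) := by
  intro a b hab
  by_cases h : c ≤ a
  · simp [h, h.trans hab]
  · by_cases h' : c ≤ b <;> simp [h, h']

lemma integral_step (c b : ℝ) :
    ∫ s in (0:ℝ)..b, (if c ≤ s then (1:ℝ) else 0) = max (b - c) 0 - max (0 - c) 0 := by
  have key : ∀ x : ℝ, HasDerivWithinAt (fun s : ℝ => max (s - c) 0)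
      (if c ≤ x then (1:ℝ) else 0) (Set.Ioi x) x := by
    intro x
    rcases le_or_gt c x with h | h
    · simp only [h, if_true]
      have hd : HasDerivWithinAt (fun s : ℝ => s - c) 1 (Set.Ioi x) x :=
        ((hasDerivWithinAt_id x _).sub_const c)
      refine hd.congr (fun y hy => ?_) ?_
      · exact max_eq_left (sub_nonneg.mpr (h.trans (le_of_lt hy)))
      · exact max_eq_left (sub_nonneg.mpr h)
    · simp only [not_le.mpr h, if_false]
      have hev : (fun s : ℝ => max (s - c) 0) =ᶠ[nhdsWithin x (Set.Ioi x)]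
          (fun _ => (0:ℝ)) := by
        filter_upwards [mem_nhdsWithin_of_mem_nhds (Iio_mem_nhds h)] with y hy
        simp [max_eq_right (sub_nonpos.mpr (Set.mem_Iio.mp hy).le)]
      exact (hasDerivWithinAt_const x _ (0:ℝ)).congr_of_eventuallyEq hev
        (by simp [max_eq_right (sub_nonpos.mpr h.le)])
  have hcont : ContinuousOn (fun s : ℝ => max (s - c) 0) (Set.uIcc 0 b) :=
    ((continuous_id.sub continuous_const).max continuous_const).continuousOn
  have hint : IntervalIntegrable (fun s : ℝ => if c ≤ s then (1:ℝ) else 0)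
      MeasureTheory.volume 0 b := (step_monotone c).intervalIntegrable
  have := intervalIntegral.integral_eq_sub_of_hasDeriv_right hcont
    (fun x _ => key x) hint
  simpa using this

theorem check_identity_integral (τ v1 v2 : ℝ) (hτ : τ ∈ Set.Ioo (0:ℝ) 1) :
    check τ (v1 - v2) - check τ v1 =
      -v2 * xi τ v1 +
        ∫ s in (0:ℝ)..v2, ((if v1 ≤ s then (1:ℝ) else 0) - (if v1 < 0 then (1:ℝ) else 0)) := by
  have hint : IntervalIntegrable (fun s : ℝ => if v1 ≤ s then (1:ℝ) else 0)
      MeasureTheory.volume 0 v2 := (step_monotone v1).intervalIntegrable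
  rw [intervalIntegral.integral_sub hint (intervalIntegrable_const), integral_step,
    intervalIntegral.integral_const]
  unfold check xi
  rcases lt_or_ge v1 0 with h1 | h1 <;>
    rcases lt_or_ge (v1 - v2) 0 with h2 | h2 <;>
    simp only [h1, h2, if_true, if_false, if_pos, if_neg, not_lt, smul_eq_mul]
  · rw [max_eq_left (by linarith), max_eq_left (by linarith)]; ring
  · rw [max_eq_right (by linarith), max_eq_left (by linarith)]; ring
  · rw [max_eq_left (by linarith), max_eq_right (by linarith)]; ring
  · rw [max_eq_right (by linarith), max_eq_right (by linarith)]; ring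
end

section
/- Let ε be a random variable with continuous distribution function F, continuous density f, finite mean, and let F⁻¹ be differentiable on (0,1). Define g(τ) := E[ρ_τ(ε − F⁻¹(τ))]. Then g is differentiable on (0,1) with g′(τ) = E[ε] − F⁻¹(τ). -/
open MeasureTheory

/-!
Since ρ_τ(u) = τu + (−u)⁺, we have g(τ) = τ(E ε − F⁻¹(τ)) + φ(F⁻¹(τ)) with φ(t) = E[(t − ε)⁺].
By Fubini, φ(b) − φ(a) = ∫_a^b F, so φ′ = F as F is continuous; continuity also gives
F(F⁻¹(τ)) = τ. The chain rule then yields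
g′(τ) = E ε − F⁻¹(τ) − τ (F⁻¹)′(τ) + F(F⁻¹(τ)) (F⁻¹)′(τ) = E ε − F⁻¹(τ).
-/

open Set Filter Topology ProbabilityTheory

theorem Continuous.apply_csInf_setOf_le_eq {F : ℝ → ℝ} {τ : ℝ} (hF : Continuous F)
    (hbot : ∀ᶠ x in atBot, F x < τ) (htop : ∃ x, τ ≤ F x) :
    F (sInf {x | τ ≤ F x}) = τ := by
  have hbdd : BddBelow {x | τ ≤ F x} := by
    obtain ⟨x₀, hx₀⟩ := eventually_atBot.1 hbot
    exact ⟨x₀, fun y hy => le_of_not_gt fun h => (hx₀ y h.le).not_ge hy⟩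
  refine le_antisymm ?_ ((isClosed_le continuous_const hF).csInf_mem htop hbdd)
  refine le_of_tendsto (x := 𝓝[<] sInf {x | τ ≤ F x})
    (hF.continuousAt.tendsto.mono_left nhdsWithin_le_nhds) ?_
  filter_upwards [self_mem_nhdsWithin] with y hy
  exact (not_le.1 (notMem_of_lt_csInf (s := {x | τ ≤ F x}) hy hbdd)).le

theorem setIntegral_Ioc_indicator_Ici_one (e : ℝ) {a b : ℝ} (hab : a ≤ b) :
    ∫ u in Ioc a b, (Ici e).indicator 1 u = max (b - e) 0 - max (a - e) 0 := by
  have hIoi : volume (Ici e ∩ Ioc a b) = volume (Ioc (a ⊔ e) b) := by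
    rw [← Ioc_inter_Ioi, inter_comm]
    exact measure_congr ((ae_eq_refl _).inter Ioi_ae_eq_Ici.symm)
  rw [integral_indicator_one measurableSet_Ici, measureReal_restrict_apply measurableSet_Ici,
    measureReal_def, hIoi, ← measureReal_def, Real.volume_real_Ioc]
  rcases le_total e a with h | h <;> rcases le_total e b with h' | h' <;>
    simp only [max_def] <;> split_ifs <;> linarith

section

variable {Ω : Type*} [MeasurableSpace Ω] {μ : Measure Ω} {X : Ω → ℝ}

theorem MeasureTheory.Integrable.max_const_sub_zero [IsFiniteMeasure μ] (hint : Integrable X μ)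
    (t : ℝ) : Integrable (fun ω => max (t - X ω) 0) μ :=
  ((integrable_const t).sub hint).pos_part

theorem integral_max_sub_zero_sub_integral_max_sub_zero [IsFiniteMeasure μ] (hX : Measurable X)
    (hint : Integrable X μ) {a b : ℝ} (hab : a ≤ b) :
    (∫ ω, max (b - X ω) 0 ∂μ) - (∫ ω, max (a - X ω) 0 ∂μ) = ∫ u in a..b, μ.real {ω | X ω ≤ u} := by
  have hprod : Integrable (Function.uncurry fun ω u => (Ici (X ω)).indicator (1 : ℝ → ℝ) u)
      (μ.prod (volume.restrict (Ioc a b))) :=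
    (integrable_const 1).indicator (measurableSet_le (hX.comp measurable_fst) measurable_snd)
  calc (∫ ω, max (b - X ω) 0 ∂μ) - (∫ ω, max (a - X ω) 0 ∂μ)
      = ∫ ω, (∫ u in Ioc a b, (Ici (X ω)).indicator 1 u) ∂μ := by
        rw [← integral_sub (hint.max_const_sub_zero b) (hint.max_const_sub_zero a)]
        simp only [setIntegral_Ioc_indicator_Ici_one _ hab]
    _ = ∫ u in Ioc a b, ∫ ω, {ω | X ω ≤ u}.indicator 1 ω ∂μ := integral_integral_swap hprod
    _ = ∫ u in a..b, μ.real {ω | X ω ≤ u} := by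
        simp only [integral_indicator_one (measurableSet_le hX measurable_const),
          intervalIntegral.integral_of_le hab]

theorem hasDerivAt_integral_max_sub_zero [IsFiniteMeasure μ] (hX : Measurable X)
    (hint : Integrable X μ) (hcont : Continuous fun x => μ.real {ω | X ω ≤ x}) (t : ℝ) :
    HasDerivAt (fun t => ∫ ω, max (t - X ω) 0 ∂μ) (μ.real {ω | X ω ≤ t}) t := by
  have hφ : (fun t => ∫ ω, max (t - X ω) 0 ∂μ)
      = fun t => ∫ ω, max (0 - X ω) 0 ∂μ + ∫ u in 0..t, μ.real {ω | X ω ≤ u} := by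
    funext t
    rcases le_total 0 t with h | h
    · linarith [integral_max_sub_zero_sub_integral_max_sub_zero hX hint h]
    · linarith [integral_max_sub_zero_sub_integral_max_sub_zero hX hint h,
        intervalIntegral.integral_symm (μ := volume) (f := fun u => μ.real {ω | X ω ≤ u}) 0 t]
  rw [hφ]
  exact ((hcont.integral_hasStrictDerivAt 0 t).hasDerivAt).const_add _

theorem check_eq (τ u : ℝ) : check τ u = τ * u + max (-u) 0 := by
  rcases lt_or_ge u 0 with h | h
  · rw [check, if_pos h, max_eq_left (by linarith)]; ring
  · rw [check, if_neg h.not_gt, max_eq_right (by linarith)]; ring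

theorem integral_check_sub [IsProbabilityMeasure μ] (hint : Integrable X μ) (τ q : ℝ) :
    ∫ ω, check τ (X ω - q) ∂μ = τ * (∫ ω, X ω ∂μ - q) + ∫ ω, max (q - X ω) 0 ∂μ := by
  have hlin : Integrable (fun ω => τ * (X ω - q)) μ := (hint.sub (integrable_const q)).const_mul τ
  simp only [check_eq, neg_sub]
  rw [integral_add hlin (hint.max_const_sub_zero q),
    integral_const_mul, integral_sub hint (integrable_const q), integral_const, probReal_univ,
    one_smul]

theorem cdf_map_eq_measureReal [IsProbabilityMeasure μ] (hX : Measurable X) (x : ℝ) :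
    cdf (μ.map X) x = μ.real {ω | X ω ≤ x} := by
  have := Measure.isProbabilityMeasure_map (μ := μ) hX.aemeasurable
  rw [cdf_eq_real, measureReal_def, measureReal_def,
    Measure.map_apply hX measurableSet_Iic]
  rfl

end

theorem deriv_expected_SRAR_general
    {Ω : Type*} [MeasurableSpace Ω] (μ : Measure Ω) [IsProbabilityMeasure μ]
    (ε : Ω → ℝ) (hε : Measurable ε) (hint : Integrable ε μ)
    (F Finv : ℝ → ℝ)
    (hF : ∀ x, F x = (μ {ω | ε ω ≤ x}).toReal)
    (hFcont : Continuous F)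
    (hFinv : ∀ τ ∈ Set.Ioo (0:ℝ) 1, Finv τ = sInf {x | τ ≤ F x})
    (hFinvdiff : ∀ τ ∈ Set.Ioo (0:ℝ) 1, DifferentiableAt ℝ Finv τ)
    (g : ℝ → ℝ)
    (hg : ∀ τ, g τ = ∫ ω, check τ (ε ω - Finv τ) ∂μ) :
    ∀ τ ∈ Set.Ioo (0:ℝ) 1, HasDerivAt g ((∫ ω, ε ω ∂μ) - Finv τ) τ := by
  intro τ hτ
  have hFreal (x : ℝ) : F x = μ.real {ω | ε ω ≤ x} := (hF x).trans (measureReal_def ..).symm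
  have hFcdf (x : ℝ) : F x = cdf (μ.map ε) x := by rw [hFreal, cdf_map_eq_measureReal hε]
  have hquantile : F (Finv τ) = τ := by
    rw [hFinv τ hτ]
    refine hFcont.apply_csInf_setOf_le_eq ?_ ?_
    · simpa only [← hFcdf] using (tendsto_cdf_atBot (μ.map ε)).eventually (eventually_lt_nhds hτ.1)
    · simpa only [← hFcdf] using
        ((tendsto_cdf_atTop (μ.map ε)).eventually (eventually_ge_nhds hτ.2)).exists
  have hφ := hasDerivAt_integral_max_sub_zero hε hint (hFcont.congr hFreal) (Finv τ)
  have hq := (hFinvdiff τ hτ).hasDerivAt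
  rw [funext fun s => (hg s).trans (integral_check_sub hint s (Finv s))]
  refine (((hasDerivAt_id τ).mul ((hasDerivAt_const τ _).sub hq)).add
    (hφ.comp τ hq)).congr_deriv ?_
  rw [← hFreal, hquantile, id, Pi.sub_apply]
  ring

/-- If ε has continuous distribution function F with continuous density f, finite mean,
and differentiable quantile function F⁻¹, then g(τ) = E[ρ_τ(ε − F⁻¹(τ))] is differentiable
on (0,1) with derivative g′(τ) = E[ε] − F⁻¹(τ). -/
theorem deriv_expected_SRAR
    {Ω : Type*} [MeasurableSpace Ω] (μ : Measure Ω) [IsProbabilityMeasure μ]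
    (ε : Ω → ℝ) (hε : Measurable ε) (hint : Integrable ε μ)
    (F f Finv : ℝ → ℝ)
    (hF : ∀ x, F x = (μ {ω | ε ω ≤ x}).toReal)
    (hFcont : Continuous F)
    (hfcont : Continuous f)
    (hFderiv : ∀ x, HasDerivAt F (f x) x)
    (hFinv : ∀ τ ∈ Set.Ioo (0:ℝ) 1, Finv τ = sInf {x | τ ≤ F x})
    (hFinvdiff : ∀ τ ∈ Set.Ioo (0:ℝ) 1, DifferentiableAt ℝ Finv τ)
    (g : ℝ → ℝ)
    (hg : ∀ τ, g τ = ∫ ω, check τ (ε ω - Finv τ) ∂μ) :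
    ∀ τ ∈ Set.Ioo (0:ℝ) 1, HasDerivAt g ((∫ ω, ε ω ∂μ) - Finv τ) τ :=
  deriv_expected_SRAR_general μ ε hε hint F Finv hF hFcont hFinv hFinvdiff g hg
end

section
/- If ε is symmetrically distributed about 0 with continuous strictly increasing distribution function F and finite mean, then the function g(τ) := E[ρ_τ(ε − F⁻¹(τ))] is symmetric about τ = 1/2, i.e., g(τ) = g(1−τ) for all τ ∈ (0,1). -/
/-! Let ν be the law of ε and q the τ-quantile, so F q = τ. A continuous distribution function
has no atoms, so the symmetry of ν gives F (-x) = 1 - F x and hence F⁻¹ (1 - τ) = -q.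
Since ρ_{1-τ}(-u) = ρ_τ(u), g (1 - τ) = E ρ_τ(-ε - q), which is g τ because -ε has the law of ε. -/

open MeasureTheory

open ProbabilityTheory Set

lemma check_one_sub_neg (τ u : ℝ) : check (1 - τ) (-u) = check τ u := by
  unfold check
  rcases lt_trichotomy u 0 with h | rfl | h
  · rw [if_pos h, if_neg (by linarith)]; ring
  · simp
  · rw [if_pos (by linarith), if_neg h.not_gt]; ring

lemma measurable_check (τ : ℝ) : Measurable (check τ) :=
  measurable_id.mul <| measurable_const.sub <|
    Measurable.ite measurableSet_Iio measurable_const measurable_const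

lemma integral_check_add_eq_of_map_neg {ν : Measure ℝ} (hsym : ν.map Neg.neg = ν) (τ q : ℝ) :
    ∫ x, check (1 - τ) (x + q) ∂ν = ∫ x, check τ (x - q) ∂ν := by
  have hf : Measurable fun x => check τ (x - q) :=
    (measurable_check τ).comp (measurable_sub_const q)
  nth_rw 2 [← hsym]
  rw [integral_map measurable_neg.aemeasurable hf.aestronglyMeasurable]
  congr 1 with x
  rw [← check_one_sub_neg τ, neg_sub, sub_neg_eq_add, add_comm]

lemma StrictMono.csInf_setOf_le_eq {α β : Type*} [ConditionallyCompleteLinearOrder α]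
    [Preorder β] {f : α → β} (hf : StrictMono f) (a : α) : sInf {x | f a ≤ f x} = a := by
  simp_rw [hf.le_iff_le]
  exact csInf_Ici

namespace ProbabilityTheory

variable {ν : Measure ℝ}

lemma mem_range_cdf_of_continuous (h : Continuous (cdf ν)) {τ : ℝ} (hτ : τ ∈ Ioo 0 1) :
    τ ∈ range (cdf ν) :=
  mem_range_of_exists_le_of_exists_ge h
    ((tendsto_cdf_atBot ν).eventually (eventually_le_nhds hτ.1)).exists
    ((tendsto_cdf_atTop ν).eventually (eventually_ge_nhds hτ.2)).exists

variable [IsProbabilityMeasure ν]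

lemma nullSingletonClass_of_continuous_cdf (h : Continuous (cdf ν)) : NullSingletonClass ν where
  measure_singleton x := by
    rw [← measure_cdf ν, StieltjesFunction.measure_singleton,
      h.continuousWithinAt.leftLim_eq, sub_self, ENNReal.ofReal_zero]

lemma cdf_neg_of_map_neg (hsym : ν.map Neg.neg = ν) (h : Continuous (cdf ν)) (x : ℝ) :
    cdf ν (-x) = 1 - cdf ν x := by
  have := nullSingletonClass_of_continuous_cdf h
  have hneg : cdf ν (-x) = ν.real (Ici x) := by
    rw [cdf_eq_real]
    nth_rw 1 [← hsym]
    rw [map_measureReal_apply measurable_neg measurableSet_Iic,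
      neg_preimage, neg_Iic, neg_neg]
  rw [hneg, cdf_eq_real, ← measureReal_congr Iio_ae_eq_Iic, ← compl_Iio,
    probReal_compl_eq_one_sub measurableSet_Iio]

end ProbabilityTheory

theorem expected_SRAR_symmetric_general
    {Ω : Type*} [MeasurableSpace Ω] (μ : Measure Ω) [IsProbabilityMeasure μ]
    (ε : Ω → ℝ) (hε : Measurable ε)
    (hsym : Measure.map ε μ = Measure.map (fun ω => -ε ω) μ)
    (F Finv : ℝ → ℝ)
    (hF : ∀ x, F x = (μ {ω | ε ω ≤ x}).toReal)
    (hFcont : Continuous F) (hFmono : StrictMono F)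
    (hFinv : ∀ τ ∈ Set.Ioo (0:ℝ) 1, Finv τ = sInf {x | τ ≤ F x})
    (g : ℝ → ℝ)
    (hg : ∀ τ, g τ = ∫ ω, check τ (ε ω - Finv τ) ∂μ) :
    ∀ τ ∈ Set.Ioo (0:ℝ) 1, g τ = g (1 - τ) := by
  set ν := μ.map ε
  have := Measure.isProbabilityMeasure_map (μ := μ) hε.aemeasurable
  obtain rfl : F = cdf ν := funext fun x => by
    rw [hF, cdf_eq_real, map_measureReal_apply hε measurableSet_Iic]; rfl
  have hνsym : ν.map Neg.neg = ν := by
    rw [Measure.map_map measurable_neg hε]; exact hsym.symm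
  have hgν : ∀ τ, g τ = ∫ x, check τ (x - Finv τ) ∂ν := fun τ => by
    have hf : Measurable fun x => check τ (x - Finv τ) :=
      (measurable_check τ).comp (measurable_sub_const _)
    rw [hg, integral_map hε.aemeasurable hf.aestronglyMeasurable]
  intro τ hτ
  obtain ⟨q, rfl⟩ := mem_range_cdf_of_continuous hFcont hτ
  have hτ' : 1 - cdf ν q ∈ Ioo 0 1 := ⟨by linarith [hτ.2], by linarith [hτ.1]⟩
  have hq : Finv (cdf ν q) = q := (hFinv _ hτ).trans (hFmono.csInf_setOf_le_eq q)
  have hq' : Finv (1 - cdf ν q) = -q := by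
    rw [hFinv _ hτ', ← cdf_neg_of_map_neg hνsym hFcont, hFmono.csInf_setOf_le_eq]
  rw [hgν, hgν, hq, hq']
  simp_rw [sub_neg_eq_add]
  exact (integral_check_add_eq_of_map_neg hνsym _ _).symm

/-- If ε is symmetrically distributed about 0 with continuous strictly increasing
distribution function F and finite mean, then g(τ) = E[ρ_τ(ε − F⁻¹(τ))] satisfies
g(τ) = g(1−τ) for all τ ∈ (0,1). -/
theorem expected_SRAR_symmetric
    {Ω : Type*} [MeasurableSpace Ω] (μ : Measure Ω) [IsProbabilityMeasure μ]
    (ε : Ω → ℝ) (hε : Measurable ε) (hint : Integrable ε μ)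
    (hsym : Measure.map ε μ = Measure.map (fun ω => -ε ω) μ)
    (F Finv : ℝ → ℝ)
    (hF : ∀ x, F x = (μ {ω | ε ω ≤ x}).toReal)
    (hFcont : Continuous F) (hFmono : StrictMono F)
    (hFinv : ∀ τ ∈ Set.Ioo (0:ℝ) 1, Finv τ = sInf {x | τ ≤ F x})
    (g : ℝ → ℝ)
    (hg : ∀ τ, g τ = ∫ ω, check τ (ε ω - Finv τ) ∂μ) :
    ∀ τ ∈ Set.Ioo (0:ℝ) 1, g τ = g (1 - τ) :=
  expected_SRAR_symmetric_general μ ε hε hsym F Finv hF hFcont hFmono hFinv g hg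
end
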